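/- Let a, b, c be real numbers with a < 0, b > 0, c > 0 and b ≠ c. Then ∑_{n=0}^∞ (n+1)^2·(a)_n (b)_n (c)_n / ((b+1)_n (c+1)_n · n!) = (b c Γ(1−a)/(c−b)) · [ (1−b)^2 Γ(b)/Γ(1−a+b) − (1−c)^2 Γ(c)/Γ(1−a+c) ]. -/

import Mathlib

noncomputable section

/-- Pochhammer symbol `(x)_n` for a complex number. -/
def poch (x : ℂ) (n : ℕ) : ℂ := ∏ k ∈ Finset.range n, (x + k)

/-- Pochhammer symbol `(x)_n` for a real number. -/
def pochR (x : ℝ) (n : ℕ) : ℝ := ∏ k ∈ Finset.range n, (x + k)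

/-- The open unit disc in `ℂ`. -/
def unitDisc : Set ℂ := {z : ℂ | ‖z‖ < 1}

/-- The class `A` of analytic functions on the unit disc normalized by
`f 0 = 0`, `f' 0 = 1` (i.e. `f z = z + ∑_{n≥2} a_n z^n`). -/
def memA (f : ℂ → ℂ) : Prop :=
  AnalyticOnNhd ℂ f unitDisc ∧ f 0 = 0 ∧ deriv f 0 = 1

/-- The class `S*_λ`. -/
def starlikeOrder (lam : ℝ) (f : ℂ → ℂ) : Prop :=
  memA f ∧ (∀ z ∈ unitDisc, z ≠ 0 → f z ≠ 0) ∧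
    ∀ z ∈ unitDisc, z ≠ 0 → ‖z * deriv f z / f z - 1‖ < lam

/-- The class `C_λ`: `f ∈ A` and `z ↦ z f'(z)` is in `S*_λ`. -/
def convexOrder (lam : ℝ) (f : ℂ → ℂ) : Prop :=
  memA f ∧ starlikeOrder lam (fun z => z * deriv f z)

/-- Uniformly convex functions. -/
def memUCV (f : ℂ → ℂ) : Prop :=
  memA f ∧ ∀ z ∈ unitDisc, deriv f z ≠ 0 ∧
    ‖z * deriv (deriv f) z / deriv f z‖ <
      (1 + z * deriv (deriv f) z / deriv f z).re

/-- The class `S_p`. -/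
def memSp (f : ℂ → ℂ) : Prop :=
  memA f ∧ (∀ z ∈ unitDisc, z ≠ 0 → f z ≠ 0) ∧
    ∀ z ∈ unitDisc, z ≠ 0 →
      ‖z * deriv f z / f z - 1‖ < (z * deriv f z / f z).re

/-- The class `R(β)`. -/
def memR (beta : ℝ) (f : ℂ → ℂ) : Prop :=
  memA f ∧ ∃ η ∈ Set.Ioo (-(Real.pi / 2)) (Real.pi / 2),
    ∀ z ∈ unitDisc, 0 < (Complex.exp (η * Complex.I) * (deriv f z - beta)).re

/-- The class `S` of univalent functions in `A`. -/
def memS (f : ℂ → ℂ) : Prop :=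
  memA f ∧ Set.InjOn f unitDisc

/-- Taylor coefficient of `f` at the origin. -/
def coeffAt (f : ℂ → ℂ) (n : ℕ) : ℂ := iteratedDeriv n f 0 / n.factorial

/-- Clausen's hypergeometric function `₃F₂(a,b,c;d,e;z)`. -/
def hyp32 (a b c d e z : ℂ) : ℂ :=
  ∑' n : ℕ, poch a n * poch b n * poch c n /
    (poch d n * poch e n * (n.factorial : ℂ)) * z ^ n

/-- The operator `I_{a,b,c}`: Hadamard product of `z ₃F₂(a,b,c;b+1,c+1;z)` with `f`. -/
def opI (a : ℂ) (b c : ℝ) (f : ℂ → ℂ) (z : ℂ) : ℂ :=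
  z + ∑' n : ℕ,
    (poch a (n + 1) * poch (b : ℂ) (n + 1) * poch (c : ℂ) (n + 1) /
      (poch ((b : ℂ) + 1) (n + 1) * poch ((c : ℂ) + 1) (n + 1) *
        ((n + 1).factorial : ℂ))) * coeffAt f (n + 2) * z ^ (n + 2)

/-!
Since `(b)_n / (b+1)_n = b / (b+n)`, the `n`-th term is `b c (a)_n / n!` times
`(n+1)^2 / ((b+n)(c+n))`, and partial fractions split this rational function as
`1 + (1-b)^2/((c-b)(b+n)) - (1-c)^2/((c-b)(c+n))`. The theorem thus reduces to two series:
`∑ (a)_n / n! = 0`, by Abel's theorem applied to the binomial series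
`∑ (a)_n x^n / n! = (1-x)^(-a)`, and `∑ (a)_n / (n! (b+n)) = B(b, 1-a)`, by integrating
`x^(b-1)` against the binomial series over `(0,1)`. Both limit exchanges rest on the absolute
convergence of `∑ (a)_n / n!`, which comes from Euler's limit formula for `Γ`:
`(a)_(n+1) / (n+1)! ~ n^(a-1) / Γ(a)`, unless `a` is a nonpositive integer and the series
terminates.
-/

open Filter Topology Finset Asymptotics Set MeasureTheory
open scoped Nat

lemma pochR_eq_ascPochhammer_eval (x : ℝ) (n : ℕ) :
    pochR x n = (ascPochhammer ℝ n).eval x := by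
  induction n with
  | zero => simp [pochR]
  | succ n ih => rw [pochR, prod_range_succ, ← pochR, ih, ascPochhammer_succ_eval]

lemma choose_eq_pochR_div_factorial (a : ℝ) (n : ℕ) :
    Ring.choose (a + n - 1) n = pochR a n / n ! := by
  rw [Ring.choose_eq_smul, Polynomial.descPochhammer_smeval_eq_ascPochhammer,
    show a + n - 1 - n + 1 = a by ring,
    Polynomial.ascPochhammer_smeval_eq_eval, pochR_eq_ascPochhammer_eval]
  simp [div_eq_inv_mul]

lemma hasSum_pochR_div_factorial_mul_pow (a : ℝ) {x : ℝ} (hx : |x| < 1) :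
    HasSum (fun n => pochR a n / n ! * x ^ n) ((1 - x) ^ (-a)) := by
  have h := (Real.one_div_one_sub_rpow_hasFPowerSeriesOnBall_zero a).hasSum
    (y := x) (by simpa [← ofReal_norm] using hx)
  have h1 : 0 ≤ 1 - x := by linarith [le_abs_self x]
  simpa [FormalMultilinearSeries.ofScalars, choose_eq_pochR_div_factorial, Real.rpow_neg h1] using h

lemma pochR_mul_add (x : ℝ) (n : ℕ) : pochR x n * (x + n) = x * pochR (x + 1) n := by
  rw [pochR, pochR, ← prod_range_succ (fun k : ℕ => x + k), prod_range_succ', mul_comm]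
  simp [add_comm, add_left_comm]

lemma pochR_div_pochR_add_one {x : ℝ} (hx : 0 < x) (n : ℕ) :
    pochR x n / pochR (x + 1) n = x / (x + n) := by
  have hpos : 0 < pochR (x + 1) n := prod_pos fun k _ => by positivity
  rw [div_eq_div_iff hpos.ne' (by positivity), pochR_mul_add]

lemma pochR_succ_div_factorial (a : ℝ) {n : ℕ} (hn : n ≠ 0) :
    pochR a (n + 1) / (n + 1)! = (n : ℝ) ^ a / (n + 1) * (Real.GammaSeq a n)⁻¹ := by
  have hna : (n : ℝ) ^ a ≠ 0 := (Real.rpow_pos_of_pos (by positivity) a).ne'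
  rw [Real.GammaSeq, ← pochR, inv_div, Nat.factorial_succ]
  push_cast
  field_simp

lemma summable_pochR_div_factorial {a : ℝ} (ha : a < 0) :
    Summable fun n => pochR a n / n ! := by
  rw [← summable_nat_add_iff 1]
  by_cases hΓ : Real.Gamma a = 0
  · obtain ⟨m, rfl⟩ := (Real.Gamma_eq_zero_iff a).1 hΓ
    refine summable_of_ne_finset_zero (s := range m) fun n hn => ?_
    have hmn : m < n + 1 := Nat.lt_succ_of_le (not_lt.1 (mem_range.not.1 hn))
    rw [pochR, prod_eq_zero (mem_range.2 hmn) (by ring), zero_div]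
  · have hΓinv : (fun n => (Real.GammaSeq a n)⁻¹) =O[atTop] (fun _ => (1 : ℝ)) :=
      ((Real.GammaSeq_tendsto_Gamma a).inv₀ hΓ).isBigO_one ℝ
    have hpow : (fun n : ℕ => (n : ℝ) ^ a / (n + 1)) =O[atTop]
        fun n : ℕ => (n : ℝ) ^ (a - 1) := by
      refine IsBigO.of_bound 1 ?_
      filter_upwards [eventually_ge_atTop 1] with n hn
      have hn' : (0 : ℝ) < n := by exact_mod_cast hn
      rw [Real.rpow_sub_one hn'.ne', Real.norm_eq_abs, Real.norm_eq_abs,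
        abs_of_nonneg (by positivity), abs_of_nonneg (by positivity), one_mul]
      exact div_le_div_of_nonneg_left (by positivity) hn' (by linarith)
    refine summable_of_isBigO_nat (Real.summable_nat_rpow.2 (by linarith : a - 1 < -1)) ?_
    refine EventuallyEq.trans_isBigO ?_ (by simpa using hpow.mul hΓinv)
    filter_upwards [eventually_ne_atTop 0] with n hn
    exact_mod_cast pochR_succ_div_factorial a hn

lemma hasSum_pochR_div_factorial_zero {a : ℝ} (ha : a < 0) :
    HasSum (fun n => pochR a n / n !) 0 := by
  have hsum := summable_pochR_div_factorial ha
  have habel := Real.tendsto_tsum_powerSeries_nhdsWithin_lt hsum.hasSum.tendsto_sum_nat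
  have hlim : Tendsto (fun x : ℝ => (1 - x) ^ (-a)) (𝓝[<] 1) (𝓝 0) := by
    have h : ContinuousAt (fun x : ℝ => (1 - x) ^ (-a)) 1 :=
      (continuousAt_const.sub continuousAt_id).rpow_const (Or.inr (by linarith))
    simpa [Real.zero_rpow (by linarith : -a ≠ 0)] using h.tendsto.mono_left nhdsWithin_le_nhds
  have heq : (fun x : ℝ => (1 - x) ^ (-a)) =ᶠ[𝓝[<] 1]
      fun x => ∑' n, pochR a n / n ! * x ^ n := by
    filter_upwards [Ioo_mem_nhdsLT (show (-1 : ℝ) < 1 by norm_num)] with x hx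
    exact (hasSum_pochR_div_factorial_mul_pow a (abs_lt.2 hx)).tsum_eq.symm
  exact tendsto_nhds_unique habel (hlim.congr' heq) ▸ hsum.hasSum

lemma integral_Ioo_rpow_mul_one_sub_rpow {b s : ℝ} (hb : 0 < b) (hs : 0 < s) :
    ∫ x in Ioo (0 : ℝ) 1, x ^ (b - 1) * (1 - x) ^ (s - 1) =
      Real.Gamma b * Real.Gamma s / Real.Gamma (b + s) := by
  have h := Complex.Gamma_mul_Gamma_eq_betaIntegral (s := b) (t := s)
    (by simpa using hb) (by simpa using hs)
  rw [Complex.betaIntegral, intervalIntegral.integral_of_le zero_le_one,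
    integral_Ioc_eq_integral_Ioo] at h
  have hre :
      ∫ x in Ioo (0 : ℝ) 1, (x : ℂ) ^ ((b : ℂ) - 1) * (1 - (x : ℂ)) ^ ((s : ℂ) - 1) =
      ((∫ x in Ioo (0 : ℝ) 1, x ^ (b - 1) * (1 - x) ^ (s - 1) : ℝ) : ℂ) := by
    rw [← integral_complex_ofReal]
    refine setIntegral_congr_fun measurableSet_Ioo fun x hx => ?_
    rw [Complex.ofReal_mul, Complex.ofReal_cpow hx.1.le,
      Complex.ofReal_cpow (by linarith [hx.2] : (0 : ℝ) ≤ 1 - x)]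
    push_cast
    rfl
  rw [hre, ← Complex.ofReal_add, Complex.Gamma_ofReal, Complex.Gamma_ofReal,
    Complex.Gamma_ofReal] at h
  rw [eq_div_iff (Real.Gamma_pos_of_pos (add_pos hb hs)).ne', mul_comm]
  exact_mod_cast h.symm

lemma integral_Ioo_rpow {q : ℝ} (hq : 0 < q) : ∫ x in Ioo (0 : ℝ) 1, x ^ (q - 1) = 1 / q := by
  simpa [Real.Gamma_add_one hq.ne', div_mul_cancel_right₀ (Real.Gamma_pos_of_pos hq).ne'] using
    integral_Ioo_rpow_mul_one_sub_rpow hq one_pos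

lemma hasSum_pochR_div_factorial_div_add {a b : ℝ} (ha : a < 0) (hb : 0 < b) :
    HasSum (fun n => pochR a n / n ! / (b + n))
      (Real.Gamma b * Real.Gamma (1 - a) / Real.Gamma (b + (1 - a))) := by
  set u : ℕ → ℝ := fun n => pochR a n / (n ! : ℝ)
  set F : ℕ → ℝ → ℝ := fun n x => u n * x ^ (b + n - 1)
  have hbn (n : ℕ) : 0 < b + n := by positivity
  have hF (n : ℕ) : IntegrableOn (F n) (Ioo 0 1) :=
    ((intervalIntegral.integrableOn_Ioo_rpow_iff one_pos).2 (by linarith [hbn n])).const_mul _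
  have hint (n : ℕ) : ∫ x in Ioo 0 1, F n x = u n / (b + n) := by
    rw [integral_const_mul, integral_Ioo_rpow (hbn n), mul_one_div]
  have hnorm (n : ℕ) : ∫ x in Ioo 0 1, ‖F n x‖ = |u n| / (b + n) := by
    rw [← mul_one_div, ← integral_Ioo_rpow (hbn n), ← integral_const_mul]
    refine setIntegral_congr_fun measurableSet_Ioo fun x hx => ?_
    rw [Real.norm_eq_abs, abs_mul, abs_of_pos (Real.rpow_pos_of_pos hx.1 _)]
  have hsum : Summable fun n => ∫ x in Ioo 0 1, ‖F n x‖ := by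
    simp_rw [hnorm]
    refine ((summable_pochR_div_factorial ha).abs.div_const b).of_nonneg_of_le
      (fun n => div_nonneg (abs_nonneg _) (hbn n).le) fun n => ?_
    exact div_le_div_of_nonneg_left (abs_nonneg _) hb (by simp)
  have htsum : ∫ x in Ioo 0 1, ∑' n, F n x =
      ∫ x in Ioo 0 1, x ^ (b - 1) * (1 - x) ^ (1 - a - 1) := by
    refine setIntegral_congr_fun measurableSet_Ioo fun x hx => ?_
    have hx' : |x| < 1 := abs_lt.2 ⟨by linarith [hx.1], hx.2⟩
    rw [show 1 - a - 1 = -a by ring, ← (hasSum_pochR_div_factorial_mul_pow a hx').tsum_eq,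
      ← tsum_mul_left]
    congr 1 with n
    simp only [F, u]
    rw [add_sub_right_comm, Real.rpow_add hx.1, Real.rpow_natCast]
    ring
  have h := hasSum_integral_of_summable_integral_norm hF hsum
  rwa [funext hint, htsum, integral_Ioo_rpow_mul_one_sub_rpow hb (by linarith)] at h

lemma sq_add_one_div_mul_add {b c t : ℝ} (hbc : b ≠ c) (hb : b + t ≠ 0) (hc : c + t ≠ 0) :
    (t + 1) ^ 2 / ((b + t) * (c + t)) =
      1 + (1 - b) ^ 2 / (c - b) / (b + t) - (1 - c) ^ 2 / (c - b) / (c + t) := by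
  have hcb : c - b ≠ 0 := sub_ne_zero.2 hbc.symm
  field_simp
  ring

lemma sq_succ_mul_pochR_div_eq {a b c : ℝ} (hb : 0 < b) (hc : 0 < c) (hbc : b ≠ c) (n : ℕ) :
    (n + 1 : ℝ) ^ 2 * pochR a n * pochR b n * pochR c n /
        (pochR (b + 1) n * pochR (c + 1) n * n !) =
      b * c * (pochR a n / n ! + (1 - b) ^ 2 / (c - b) * (pochR a n / n ! / (b + n)) -
        (1 - c) ^ 2 / (c - b) * (pochR a n / n ! / (c + n))) :=
  calc _ = (n + 1) ^ 2 * (pochR a n / n !) * (pochR b n / pochR (b + 1) n) *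
        (pochR c n / pochR (c + 1) n) := by ring
    _ = b * c * (pochR a n / n !) * ((n + 1) ^ 2 / ((b + n) * (c + n))) := by
        rw [pochR_div_pochR_add_one hb, pochR_div_pochR_add_one hc, div_mul_eq_div_div]
        ring
    _ = _ := by
        rw [sq_add_one_div_mul_add hbc (by positivity) (by positivity)]
        ring

/-- Lemma 1(2). -/
theorem lemma1_part2 (a b c : ℝ) (ha : a < 0) (hb : 0 < b) (hc : 0 < c)
    (hbc : b ≠ c) :
    HasSum
      (fun n : ℕ => (n + 1 : ℝ) ^ 2 * pochR a n * pochR b n * pochR c n /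
        (pochR (b + 1) n * pochR (c + 1) n * (n.factorial : ℝ)))
      (b * c * Real.Gamma (1 - a) / (c - b) *
        ((1 - b) ^ 2 * Real.Gamma b / Real.Gamma (1 - a + b) -
         (1 - c) ^ 2 * Real.Gamma c / Real.Gamma (1 - a + c))) := by
  have hsum := (((hasSum_pochR_div_factorial_zero ha).add
    ((hasSum_pochR_div_factorial_div_add ha hb).mul_left ((1 - b) ^ 2 / (c - b)))).sub
    ((hasSum_pochR_div_factorial_div_add ha hc).mul_left ((1 - c) ^ 2 / (c - b)))).mul_left (b * c)
  rw [funext (sq_succ_mul_pochR_div_eq hb hc hbc)]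
  refine (congrArg (HasSum _) ?_).mpr hsum
  rw [add_comm b (1 - a), add_comm c (1 - a)]
  ring

end
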